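/- arXiv:2311.16578 — 2 statements merged into one kernel-verified Lean document; each statement's English description precedes it below -/
import Mathlib

section
/- Let a be a point of P^2(\bar{F}_q) with Frobenius orbit of size 7. If {a, F(a), F^4(a)} are collinear, then the entire orbit {a, F(a), ..., F^6(a)} lies on a single F-invariant line. -/
open Projectivization
open scoped LinearAlgebra.Projectivization

variable {K : Type} [Field K]

/-- The projective plane over `K`, as the projectivization of `K^3`. -/
abbrev Pt (K : Type) [Field K] := ℙ K (Fin 3 → K)

/-- Lines in the projective plane over `K`: projectivized nonzero linear forms. -/
abbrev Ln (K : Type) [Field K] := ℙ K ((Fin 3 → K) →ₗ[K] K)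

/-- Incidence: the point lies on the line. -/
def OnLine (x : Pt K) (ℓ : Ln K) : Prop := ℓ.rep x.rep = 0

/-- Three points are collinear: some nonzero linear form vanishes on all of them. -/
def Collinear3 (a b c : Pt K) : Prop :=
  ∃ f : (Fin 3 → K) →ₗ[K] K, f ≠ 0 ∧ f a.rep = 0 ∧ f b.rep = 0 ∧ f c.rep = 0

/-- The map on the projective plane induced by `x ↦ x ^ q` on coordinates. -/
noncomputable def Frob (q : ℕ) (x : Pt K) : Pt K :=
  if hq : q = 0 then x else
  Projectivization.mk K (fun i => x.rep i ^ q) (by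
    intro h
    apply x.rep_nonzero
    funext i
    have hi := congrFun h i
    simpa using (pow_eq_zero_iff hq).mp (by simpa using hi))

/-- The algebraic closure of the field with `p ^ n` elements. -/
abbrev Kbar (p n : ℕ) [Fact p.Prime] := AlgebraicClosure (GaloisField p n)

/- ### Auxiliary lemmas -/

lemma vanish_mk (f : (Fin 3 → K) →ₗ[K] K) (v : Fin 3 → K) (hv : v ≠ 0) :
    f ((Projectivization.mk K v hv).rep) = 0 ↔ f v = 0 := by
  obtain ⟨c, hc⟩ := Projectivization.exists_smul_eq_mk_rep K v hv
  rw [← hc, Units.smul_def, map_smul, smul_eq_mul]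
  simp [c.ne_zero]

lemma indep_of_ne {x y : Pt K} (h : x ≠ y) :
    LinearIndependent K ![x.rep, y.rep] := by
  rw [linearIndependent_fin2]
  refine ⟨by simpa using y.rep_nonzero, fun c hc => ?_⟩
  simp only [Matrix.cons_val_one, Matrix.head_cons, Matrix.cons_val_zero] at hc
  apply h
  have hc0 : c ≠ 0 := by
    rintro rfl
    exact x.rep_nonzero (by simpa using hc.symm)
  rw [← Projectivization.mk_rep x, ← Projectivization.mk_rep y,
    Projectivization.mk_eq_mk_iff]
  exact ⟨Units.mk0 c hc0, hc⟩

lemma uniq {f g : (Fin 3 → K) →ₗ[K] K} {u v : Fin 3 → K}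
    (hli : LinearIndependent K ![u, v]) (hg : g ≠ 0)
    (hfu : f u = 0) (hfv : f v = 0) (hgu : g u = 0) (hgv : g v = 0) :
    ∀ x, g x = 0 → f x = 0 := by
  have hspan_le_f : Submodule.span K (Set.range ![u, v]) ≤ LinearMap.ker f := by
    rw [Submodule.span_le, Set.range_subset_iff]
    intro i; fin_cases i <;> simp [hfu, hfv]
  have hspan_le_g : Submodule.span K (Set.range ![u, v]) ≤ LinearMap.ker g := by
    rw [Submodule.span_le, Set.range_subset_iff]
    intro i; fin_cases i <;> simp [hgu, hgv]
  have hsur : Function.Surjective g := by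
    obtain ⟨w, hw⟩ : ∃ w, g w ≠ 0 := by
      by_contra hcon; push_neg at hcon
      exact hg (LinearMap.ext fun w => by simp [hcon w])
    intro c
    exact ⟨(c / g w) • w, by simp [map_smul, smul_eq_mul, div_mul_cancel₀ c hw]⟩
  have hker : Module.finrank K (LinearMap.ker g) = 2 := by
    have h1 := LinearMap.finrank_range_add_finrank_ker g
    rw [LinearMap.range_eq_top.mpr hsur] at h1
    have h2 : Module.finrank K (Fin 3 → K) = 3 := by simp
    have h3 : Module.finrank K (⊤ : Submodule K K) = 1 := by simp
    omega
  have hcard : Module.finrank K (Submodule.span K (Set.range ![u, v])) = 2 := by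
    simpa using finrank_span_eq_card hli
  have heq : Submodule.span K (Set.range ![u, v]) = LinearMap.ker g :=
    Submodule.eq_of_le_of_finrank_le hspan_le_g (by rw [hker, hcard])
  intro x hx
  have hx' : x ∈ Submodule.span K (Set.range ![u, v]) := by
    rw [heq]; exact LinearMap.mem_ker.mpr hx
  exact hspan_le_f hx'

section KbarSec

variable (p n : ℕ) [Fact p.Prime]

lemma kbar_charP : CharP (Kbar p n) p :=
  charP_of_injective_algebraMap (algebraMap (GaloisField p n) (Kbar p n)).injective p

/-- Apply `x ↦ x ^ (p^n)` to the coefficients of a linear form. -/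
noncomputable def tw (f : (Fin 3 → Kbar p n) →ₗ[Kbar p n] Kbar p n) :
    (Fin 3 → Kbar p n) →ₗ[Kbar p n] Kbar p n :=
  ∑ i : Fin 3, ((f fun j => if i = j then 1 else 0) ^ p ^ n) • LinearMap.proj i

lemma tw_apply (f : (Fin 3 → Kbar p n) →ₗ[Kbar p n] Kbar p n) (v : Fin 3 → Kbar p n) :
    tw p n f (fun i => v i ^ p ^ n) = (f v) ^ p ^ n := by
  haveI := kbar_charP p n
  haveI : ExpChar (Kbar p n) p := ExpChar.prime Fact.out
  simp only [tw, LinearMap.sum_apply, LinearMap.smul_apply, LinearMap.proj_apply,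
    smul_eq_mul]
  calc ∑ i, (f fun j => if i = j then 1 else 0) ^ p ^ n * v i ^ p ^ n
      = ∑ i, (v i * (f fun j => if i = j then 1 else 0)) ^ p ^ n := by
        simp [mul_pow, mul_comm]
    _ = (∑ i, v i * (f fun j => if i = j then 1 else 0)) ^ p ^ n := by
        rw [sum_pow_char_pow]
    _ = (f v) ^ p ^ n := by
        rw [LinearMap.pi_apply_eq_sum_univ f v]
        simp [smul_eq_mul]

lemma tw_ne {f : (Fin 3 → Kbar p n) →ₗ[Kbar p n] Kbar p n} (hf : f ≠ 0) :
    tw p n f ≠ 0 := by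
  have hq : (p : ℕ) ^ n ≠ 0 := pow_ne_zero n (Nat.Prime.ne_zero Fact.out)
  obtain ⟨v, hv⟩ : ∃ v, f v ≠ 0 := by
    by_contra hc; push_neg at hc
    exact hf (LinearMap.ext fun v => by simp [hc v])
  intro h0
  have h1 := tw_apply p n f v
  rw [h0] at h1
  simp only [LinearMap.zero_apply] at h1
  exact hv ((pow_eq_zero_iff hq).mp h1.symm)

lemma tw_vanish (f : (Fin 3 → Kbar p n) →ₗ[Kbar p n] Kbar p n) (x : Pt (Kbar p n)) :
    tw p n f ((Frob (p ^ n) x).rep) = 0 ↔ f x.rep = 0 := by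
  have hq : (p : ℕ) ^ n ≠ 0 := pow_ne_zero n (Nat.Prime.ne_zero Fact.out)
  rw [Frob, dif_neg hq, vanish_mk, tw_apply, pow_eq_zero_iff hq]

end KbarSec

theorem stmt_13 (p n : ℕ) [Fact p.Prime] (hn : n ≠ 0) (a : Pt (Kbar p n))
    (h7 : (Frob (p ^ n))^[7] a = a)
    (horb : ∀ i, 0 < i → i < 7 → (Frob (p ^ n))^[i] a ≠ a)
    (h : Collinear3 a (Frob (p ^ n) a) ((Frob (p ^ n))^[4] a)) :
    ∃ ℓ : Ln (Kbar p n), (∀ i < 7, OnLine ((Frob (p ^ n))^[i] a) ℓ) ∧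
      ∀ x : Pt (Kbar p n), OnLine x ℓ → OnLine (Frob (p ^ n) x) ℓ := by
  obtain ⟨f, hf0, hfa, hfFa, hfF4⟩ := h
  -- distinctness of orbit points
  have hne : ∀ i j, i < j → j < 7 →
      (Frob (p ^ n))^[i] a ≠ (Frob (p ^ n))^[j] a := by
    intro i j hij hj7 hEq
    have h1 : (Frob (p ^ n))^[7 - j] ((Frob (p ^ n))^[j] a) = a := by
      rw [← Function.iterate_add_apply, Nat.sub_add_cancel (le_of_lt hj7)]
      exact h7
    have h2 : (Frob (p ^ n))^[7 - j] ((Frob (p ^ n))^[i] a)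
        = (Frob (p ^ n))^[7 - (j - i)] a := by
      rw [← Function.iterate_add_apply]; congr 1; omega
    rw [hEq, h1] at h2
    exact horb (7 - (j - i)) (by omega) (by omega) h2.symm
  -- step: twisting transports vanishing one step along the orbit
  have step : ∀ (g : (Fin 3 → Kbar p n) →ₗ[Kbar p n] Kbar p n) (i : ℕ),
      g (((Frob (p ^ n))^[i] a).rep) = 0 →
      (tw p n g) (((Frob (p ^ n))^[i + 1] a).rep) = 0 := by
    intro g i hg
    rw [Function.iterate_succ_apply']
    exact (tw_vanish p n g _).mpr hg
  -- the twisted forms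
  set g1 := tw p n f with hg1def
  set g2 := tw p n g1 with hg2def
  set g3 := tw p n g2 with hg3def
  set g4 := tw p n g3 with hg4def
  have hg1 : g1 ≠ 0 := tw_ne p n hf0
  have hg2 : g2 ≠ 0 := tw_ne p n hg1
  have hg3 : g3 ≠ 0 := tw_ne p n hg2
  have hg4 : g4 ≠ 0 := tw_ne p n hg3
  -- base vanishing facts
  have h0_0 : f (((Frob (p ^ n))^[0] a).rep) = 0 := by simpa using hfa
  have h0_1 : f (((Frob (p ^ n))^[1] a).rep) = 0 := by
    rw [Function.iterate_one]; exact hfFa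
  have h0_4 : f (((Frob (p ^ n))^[4] a).rep) = 0 := hfF4
  have h1_1 : g1 (((Frob (p ^ n))^[1] a).rep) = 0 := step f 0 h0_0
  have h1_2 : g1 (((Frob (p ^ n))^[2] a).rep) = 0 := step f 1 h0_1
  have h1_5 : g1 (((Frob (p ^ n))^[5] a).rep) = 0 := step f 4 h0_4
  have h2_2 : g2 (((Frob (p ^ n))^[2] a).rep) = 0 := step g1 1 h1_1
  have h2_3 : g2 (((Frob (p ^ n))^[3] a).rep) = 0 := step g1 2 h1_2
  have h2_6 : g2 (((Frob (p ^ n))^[6] a).rep) = 0 := step g1 5 h1_5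
  have h3_3 : g3 (((Frob (p ^ n))^[3] a).rep) = 0 := step g2 2 h2_2
  have h3_4 : g3 (((Frob (p ^ n))^[4] a).rep) = 0 := step g2 3 h2_3
  have h3_0 : g3 (((Frob (p ^ n))^[0] a).rep) = 0 := by
    have h70 := step g2 6 h2_6
    rw [h7] at h70
    simpa using h70
  have h4_4 : g4 (((Frob (p ^ n))^[4] a).rep) = 0 := step g3 3 h3_3
  have h4_5 : g4 (((Frob (p ^ n))^[5] a).rep) = 0 := step g3 4 h3_4
  have h4_1 : g4 (((Frob (p ^ n))^[1] a).rep) = 0 := step g3 0 h3_0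
  -- independence of representatives of distinct orbit points
  have ind14 := indep_of_ne (hne 1 4 (by omega) (by omega))
  have ind04 := indep_of_ne (hne 0 4 (by omega) (by omega))
  have ind15 := indep_of_ne (hne 1 5 (by omega) (by omega))
  have ind23 := indep_of_ne (hne 2 3 (by omega) (by omega))
  have ind12 := indep_of_ne (hne 1 2 (by omega) (by omega))
  -- chain of uniqueness-of-line arguments, to show f vanishes on the whole orbit
  have h0_5 : f (((Frob (p ^ n))^[5] a).rep) = 0 :=
    uniq ind14 hg4 h0_1 h0_4 h4_1 h4_4 _ h4_5
  have h0_3 : f (((Frob (p ^ n))^[3] a).rep) = 0 :=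
    uniq ind04 hg3 h0_0 h0_4 h3_0 h3_4 _ h3_3
  have h0_2 : f (((Frob (p ^ n))^[2] a).rep) = 0 :=
    uniq ind15 hg1 h0_1 h0_5 h1_1 h1_5 _ h1_2
  have h0_6 : f (((Frob (p ^ n))^[6] a).rep) = 0 :=
    uniq ind23 hg2 h0_2 h0_3 h2_2 h2_3 _ h2_6
  have uinv : ∀ x, g1 x = 0 → f x = 0 :=
    uniq ind12 hg1 h0_1 h0_2 h1_1 h1_2
  -- the line
  refine ⟨Projectivization.mk (Kbar p n) f hf0, ?_, ?_⟩
  all_goals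
    obtain ⟨c, hc⟩ := Projectivization.exists_smul_eq_mk_rep (Kbar p n) f hf0
    have honl : ∀ x : Pt (Kbar p n),
        OnLine x (Projectivization.mk (Kbar p n) f hf0) ↔ f x.rep = 0 := by
      intro x
      unfold OnLine
      rw [← hc]
      simp [Units.smul_def, c.ne_zero]
  · intro i hi
    rw [honl]
    interval_cases i <;> assumption
  · intro x hx
    rw [honl] at hx ⊢
    have hx1 : g1 ((Frob (p ^ n) x).rep) = 0 := (tw_vanish p n f x).mpr hx
    exact uinv _ hx1
end

section
/- Let a be a point of P^2(\bar{F}_q) with Frobenius orbit of size 7. If {a, F^2(a), F^4(a)} are collinear, then the entire orbit {a, F(a), ..., F^6(a)} lies on a single F-invariant line. -/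
open Projectivization
open scoped LinearAlgebra.Projectivization

variable {K : Type} [Field K]

/-!
Let `L` be the line through `a`, `F² a`, `F⁴ a`, and let Frobenius act on lines by applying
`x ↦ x ^ q` to the coefficients of a linear form, so that `x ∈ ℓ ↔ F x ∈ F ℓ`. As `F` is injective,
`F² a ≠ F⁴ a`, and both `F² L` and `L` pass through these two points, so `F² L = L`. Likewise
`F⁷ L` and `L` both pass through `a ≠ F² a`, so `F⁷ L = L`. Since `gcd(2, 7) = 1`, `F L = L`,
hence `L` is `F`-invariant and contains the whole orbit of `a`.
-/

open Function Module

section Incidence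

lemma onLine_mk_iff (x : Pt K) {f : (Fin 3 → K) →ₗ[K] K} (hf : f ≠ 0) :
    OnLine x (mk K f hf) ↔ f x.rep = 0 := by
  obtain ⟨u, hu⟩ := exists_smul_eq_mk_rep K f hf
  rw [OnLine, ← hu, LinearMap.smul_apply, smul_eq_zero_iff_eq]

lemma mk_onLine_mk_iff {v : Fin 3 → K} {f : (Fin 3 → K) →ₗ[K] K} (hv : v ≠ 0) (hf : f ≠ 0) :
    OnLine (mk K v hv) (mk K f hf) ↔ f v = 0 := by
  obtain ⟨u, hu⟩ := exists_smul_eq_mk_rep K v hv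
  rw [onLine_mk_iff, ← hu, Units.smul_def, map_smul, ← Units.smul_def, smul_eq_zero_iff_eq]

lemma onLine_iff_mem_projectivization_ker (x : Pt K) (ℓ : Ln K) :
    OnLine x ℓ ↔ x ∈ (LinearMap.ker ℓ.rep).projectivization := by
  conv_rhs => rw [← x.mk_rep]
  rfl

lemma Collinear3.exists_onLine {a b c : Pt K} (h : Collinear3 a b c) :
    ∃ ℓ : Ln K, OnLine a ℓ ∧ OnLine b ℓ ∧ OnLine c ℓ := by
  obtain ⟨f, hf, ha, hb, hc⟩ := h
  exact ⟨mk K f hf, (onLine_mk_iff a hf).2 ha, (onLine_mk_iff b hf).2 hb,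
    (onLine_mk_iff c hf).2 hc⟩

lemma finrank_ker_rep (ℓ : Ln K) : finrank K (LinearMap.ker ℓ.rep) = 2 := by
  have := Dual.finrank_ker_add_one_of_ne_zero ℓ.rep_nonzero
  rw [finrank_fin_fun] at this
  omega

lemma Projectivization.eq_of_ker_rep_eq {k V : Type*} [Field k] [AddCommGroup V] [Module k V]
    {ℓ ℓ' : ℙ k (Dual k V)} (h : LinearMap.ker ℓ.rep = LinearMap.ker ℓ'.rep) : ℓ = ℓ' := by
  have hspan : ℓ.rep ∈ Submodule.span k (Set.range fun _ : Unit => ℓ'.rep) :=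
    mem_span_of_iInf_ker_le_ker (by rw [iInf_const, h])
  rw [Set.range_const, Submodule.mem_span_singleton] at hspan
  obtain ⟨c, hc⟩ := hspan
  rw [← ℓ.mk_rep, ← ℓ'.mk_rep, mk_eq_mk_iff']
  exact ⟨c, hc⟩

theorem eq_of_onLine_of_onLine {x y : Pt K} {ℓ ℓ' : Ln K} (hxy : x ≠ y)
    (hx : OnLine x ℓ) (hy : OnLine y ℓ) (hx' : OnLine x ℓ') (hy' : OnLine y ℓ') : ℓ = ℓ' := by
  simp only [onLine_iff_mem_projectivization_ker] at hx hy hx' hy'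
  exact eq_of_ker_rep_eq <|
    line_unique hxy _ _ (finrank_ker_rep ℓ) (finrank_ker_rep ℓ') hx hy hx' hy'

end Incidence

section Frobenius

variable (e : K ≃+* K)

def coordMap : (Fin 3 → K) →ₛₗ[(e : K →+* K)] (Fin 3 → K) where
  toFun v i := e (v i)
  map_add' _ _ := funext fun _ => map_add e _ _
  map_smul' _ _ := funext fun _ => map_mul e _ _

lemma coordMap_injective : Injective (coordMap e) :=
  fun _ _ h => funext fun i => e.injective (congrFun h i)

/-- Applies `e` to the coefficients of a linear form. -/
def twist : ((Fin 3 → K) →ₗ[K] K) →ₛₗ[(e : K →+* K)] ((Fin 3 → K) →ₗ[K] K) where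
  toFun f :=
    { toFun v := e (f (coordMap e.symm v))
      map_add' _ _ := by simp only [map_add]
      map_smul' _ _ := by simp }
  map_add' _ _ := by ext; simp
  map_smul' _ _ := by ext; simp

@[simp]
lemma twist_apply_coordMap (f : (Fin 3 → K) →ₗ[K] K) (v : Fin 3 → K) :
    twist e f (coordMap e v) = e (f v) := by
  simp [twist, coordMap]

lemma twist_injective : Injective (twist e) := by
  intro f g h
  refine LinearMap.ext fun v => e.injective ?_
  simpa using congrArg (fun t => t (coordMap e v)) h

noncomputable def twistLine : Ln K → Ln K :=
  Projectivization.map (twist e) (twist_injective e)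

variable {e} {q : ℕ}

lemma frob_eq_map (he : ∀ x, e x = x ^ q) :
    Frob q = Projectivization.map (coordMap e) (coordMap_injective e) := by
  have hq : q ≠ 0 := by
    rintro rfl
    simpa using he 0
  funext x
  conv_rhs => rw [← x.mk_rep]
  rw [Frob, dif_neg hq, map_mk]
  congr 1
  funext i
  exact (he _).symm

lemma frob_injective (he : ∀ x, e x = x ^ q) : Injective (Frob q : Pt K → Pt K) := by
  have := RingHomInvPair.of_ringEquiv e
  rw [frob_eq_map he]
  exact map_injective _ _

lemma onLine_frob_twistLine_iff (he : ∀ x, e x = x ^ q) (x : Pt K) (ℓ : Ln K) :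
    OnLine (Frob q x) (twistLine e ℓ) ↔ OnLine x ℓ := by
  induction x using ind with | h v hv => ?_
  induction ℓ using ind with | h f hf => ?_
  simp only [frob_eq_map he, twistLine, map_mk, mk_onLine_mk_iff, twist_apply_coordMap,
    map_eq_zero_iff _ e.injective]

lemma onLine_iterate_frob_twistLine_iff (he : ∀ x, e x = x ^ q) (k : ℕ) (x : Pt K) (ℓ : Ln K) :
    OnLine ((Frob q)^[k] x) ((twistLine e)^[k] ℓ) ↔ OnLine x ℓ := by
  induction k generalizing x ℓ with
  | zero => rfl
  | succ k ih => rw [iterate_succ_apply, iterate_succ_apply, ih, onLine_frob_twistLine_iff he]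

end Frobenius

theorem exists_frob_invariant_line_of_collinear {e : K ≃+* K} {q m : ℕ} (he : ∀ x, e x = x ^ q)
    (hm : Odd m) {a : Pt K} (ha : IsPeriodicPt (Frob q) m a) (ha2 : (Frob q)^[2] a ≠ a)
    (h : Collinear3 a ((Frob q)^[2] a) ((Frob q)^[4] a)) :
    ∃ ℓ : Ln K, (∀ i, OnLine ((Frob q)^[i] a) ℓ) ∧ ∀ x, OnLine x ℓ → OnLine (Frob q x) ℓ := by
  set G := twistLine e
  have hF := onLine_iterate_frob_twistLine_iff he
  obtain ⟨L, h0, h2, h4⟩ := h.exists_onLine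
  have hG2 : IsPeriodicPt G 2 L :=
    eq_of_onLine_of_onLine (((frob_injective he).iterate 2).ne ha2.symm)
      ((hF 2 _ _).2 h0) ((hF 2 _ _).2 h2) h2 h4
  have hGm : IsPeriodicPt G m L :=
    eq_of_onLine_of_onLine (((frob_injective he).iterate m).ne ha2.symm)
      ((hF m _ _).2 h0) ((hF m _ _).2 h2) (by rwa [ha.eq]) (by rwa [(ha.apply_iterate 2).eq])
  have hG : IsFixedPt G L := by
    have h1 := hG2.gcd hGm
    rwa [(Nat.coprime_two_left.2 hm).gcd_eq_one] at h1
  refine ⟨L, fun i => ?_, fun x hx => ?_⟩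
  · exact (hG.iterate i).eq ▸ (hF i a L).2 h0
  · rw [← hG]
    exact (onLine_frob_twistLine_iff he x L).2 hx

theorem stmt_14_general (p n : ℕ) [Fact p.Prime] (a : Pt (Kbar p n))
    (h7 : (Frob (p ^ n))^[7] a = a)
    (horb : ∀ i, 0 < i → i < 7 → (Frob (p ^ n))^[i] a ≠ a)
    (h : Collinear3 a ((Frob (p ^ n))^[2] a) ((Frob (p ^ n))^[4] a)) :
    ∃ ℓ : Ln (Kbar p n), (∀ i < 7, OnLine ((Frob (p ^ n))^[i] a) ℓ) ∧
      ∀ x : Pt (Kbar p n), OnLine x ℓ → OnLine (Frob (p ^ n) x) ℓ := by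
  obtain ⟨ℓ, horbit, hinv⟩ := exists_frob_invariant_line_of_collinear
    (iterateFrobeniusEquiv_def (Kbar p n) p n) (by decide) h7 (horb 2 two_pos (by norm_num)) h
  exact ⟨ℓ, fun i _ => horbit i, hinv⟩

theorem stmt_14 (p n : ℕ) [Fact p.Prime] (hn : n ≠ 0) (a : Pt (Kbar p n))
    (h7 : (Frob (p ^ n))^[7] a = a)
    (horb : ∀ i, 0 < i → i < 7 → (Frob (p ^ n))^[i] a ≠ a)
    (h : Collinear3 a ((Frob (p ^ n))^[2] a) ((Frob (p ^ n))^[4] a)) :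
    ∃ ℓ : Ln (Kbar p n), (∀ i < 7, OnLine ((Frob (p ^ n))^[i] a) ℓ) ∧
      ∀ x : Pt (Kbar p n), OnLine x ℓ → OnLine (Frob (p ^ n) x) ℓ :=
  stmt_14_general p n a h7 horb h
end
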